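/- For any two distinct edges e1, e2 of a connected graph G, the set R_e{e1,e2} = {z ∈ V(G) : d(z,e1) ≠ d(z,e2)} has cardinality at least 2. -/

import Mathlib

open Finset
open scoped Classical

variable {V : Type*}

/-- Distance from a vertex to an edge: minimum distance to an endpoint. -/
noncomputable def SimpleGraph.edgeDist (G : SimpleGraph V) (e : Sym2 V) (v : V) : ℕ :=
  Sym2.lift ⟨fun a b => min (G.dist a v) (G.dist b v), fun a b => min_comm _ _⟩ e

/-- A set of vertices is an edge resolving set if every pair of distinct edges
is distinguished by some vertex of the set. -/
def SimpleGraph.IsEdgeResolvingSet (G : SimpleGraph V) (S : Set V) : Prop :=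
  ∀ e₁ ∈ G.edgeSet, ∀ e₂ ∈ G.edgeSet, e₁ ≠ e₂ →
    ∃ s ∈ S, G.edgeDist e₁ s ≠ G.edgeDist e₂ s

/-- The edge dimension: minimum cardinality of an edge resolving set. -/
noncomputable def SimpleGraph.edim (G : SimpleGraph V) [Fintype V] : ℕ :=
  sInf {n | ∃ S : Finset V, G.IsEdgeResolvingSet ↑S ∧ S.card = n}

/-- An edge resolving function: a `[0,1]`-valued weighting of the vertices such
that every pair of distinct edges is resolved by total weight at least 1. -/
def SimpleGraph.IsEdgeResolvingFunction (G : SimpleGraph V) [Fintype V] (g : V → ℝ) : Prop :=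
  (∀ v, 0 ≤ g v ∧ g v ≤ 1) ∧
  ∀ e₁ ∈ G.edgeSet, ∀ e₂ ∈ G.edgeSet, e₁ ≠ e₂ →
    1 ≤ ∑ z ∈ Finset.univ.filter (fun z => G.edgeDist e₁ z ≠ G.edgeDist e₂ z), g z

/-- The fractional edge dimension. -/
noncomputable def SimpleGraph.edimf (G : SimpleGraph V) [Fintype V] : ℝ :=
  sInf {x | ∃ g : V → ℝ, G.IsEdgeResolvingFunction g ∧ ∑ v, g v = x}

lemma Sym2.exists_mem_notMem_of_ne {α : Type*} {e f : Sym2 α} (he : ¬e.IsDiag) (hne : e ≠ f) :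
    ∃ a ∈ e, a ∉ f := by
  induction e using Sym2.inductionOn with
  | hf a b =>
    by_contra! hsub
    have hab : a ≠ b := fun h => he (by simp [h])
    exact hne ((Sym2.mem_and_mem_iff hab).mp ⟨hsub a (Sym2.mem_mk_left a b),
      hsub b (Sym2.mem_mk_right a b)⟩).symm

namespace SimpleGraph

@[simp]
lemma edgeDist_mk (G : SimpleGraph V) (a b v : V) :
    G.edgeDist s(a, b) v = min (G.dist a v) (G.dist b v) :=
  rfl

lemma Connected.edgeDist_eq_zero_iff {G : SimpleGraph V} (hG : G.Connected) {e : Sym2 V}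
    {v : V} : G.edgeDist e v = 0 ↔ v ∈ e := by
  induction e using Sym2.inductionOn with
  | hf a b =>
    rw [edgeDist_mk, Nat.min_eq_zero_iff, hG.dist_eq_zero_iff, hG.dist_eq_zero_iff, Sym2.mem_iff,
      eq_comm, @eq_comm _ b]

lemma Connected.edgeDist_ne_of_mem_of_notMem {G : SimpleGraph V} (hG : G.Connected)
    {e f : Sym2 V} {v : V} (hve : v ∈ e) (hvf : v ∉ f) : G.edgeDist e v ≠ G.edgeDist f v := by
  rw [hG.edgeDist_eq_zero_iff.mpr hve, ne_comm, Ne, hG.edgeDist_eq_zero_iff]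
  exact hvf

end SimpleGraph

/-- For any two distinct edges of a connected graph, the resolving set
`R_e{e₁,e₂}` has cardinality at least 2. -/
theorem stmt_7 [Fintype V] (G : SimpleGraph V) (hG : G.Connected)
    (e₁ e₂ : Sym2 V) (h₁ : e₁ ∈ G.edgeSet) (h₂ : e₂ ∈ G.edgeSet) (hne : e₁ ≠ e₂) :
    2 ≤ (Finset.univ.filter (fun z => G.edgeDist e₁ z ≠ G.edgeDist e₂ z)).card := by
  obtain ⟨b, hb₁, hb₂⟩ := Sym2.exists_mem_notMem_of_ne (G.not_isDiag_of_mem_edgeSet h₁) hne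
  obtain ⟨d, hd₂, hd₁⟩ := Sym2.exists_mem_notMem_of_ne (G.not_isDiag_of_mem_edgeSet h₂) hne.symm
  refine Finset.one_lt_card.mpr ⟨b, ?_, d, ?_, fun hbd => hb₂ (hbd ▸ hd₂)⟩
  · simpa using hG.edgeDist_ne_of_mem_of_notMem hb₁ hb₂
  · simpa using (hG.edgeDist_ne_of_mem_of_notMem hd₂ hd₁).symm
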